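/- arXiv:2204.02689 — 10 statements merged into one kernel-verified Lean document; each statement's English description precedes it below -/
import Mathlib

section
/- Let Γ be a simple connected graph containing two adjacent vertices u and v whose neighborhoods are disjoint (i.e., no vertex is adjacent to both u and v). Then the sum of the rows of the adjacency matrix A(Γ) corresponding to u and v is a (0,1)-vector that lies in the row space of A(Γ) over the reals but does not occur as a row of A(Γ). -/
open SimpleGraph

theorem Matrix.vecMul_single_one_add_single_one {m n R : Type*} [Fintype m] [DecidableEq m]
    [NonAssocSemiring R] (M : Matrix m n R) (i j : m) :
    Matrix.vecMul (Pi.single i 1 + Pi.single j 1) M = M i + M j := by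
  rw [Matrix.add_vecMul, Matrix.single_one_vecMul, Matrix.single_one_vecMul]
  rfl

namespace SimpleGraph

variable {V R : Type*} (G : SimpleGraph V) [DecidableRel G.Adj] {u v : V}

theorem adjMatrix_add_adjMatrix_apply_eq_zero_or_one [AddMonoidWithOne R]
    (hdisj : Disjoint (G.neighborSet u) (G.neighborSet v)) (w : V) :
    (G.adjMatrix R u + G.adjMatrix R v) w = 0 ∨ (G.adjMatrix R u + G.adjMatrix R v) w = 1 := by
  by_cases hu : G.Adj u w <;> by_cases hv : G.Adj v w
  · exact (Set.disjoint_left.mp hdisj hu hv).elim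
  all_goals simp [hu, hv]

-- Evaluating at `u` and at `v` shows that such a `w` would be a common neighbour of `u` and `v`.
theorem adjMatrix_add_adjMatrix_ne_adjMatrix [AddMonoidWithOne R] [NeZero (1 : R)]
    (huv : G.Adj u v) (hdisj : Disjoint (G.neighborSet u) (G.neighborSet v)) (w : V) :
    G.adjMatrix R u + G.adjMatrix R v ≠ G.adjMatrix R w := by
  intro h
  have hwu : G.Adj w u := by
    by_contra hc
    simpa [hc, huv.symm] using congrFun h u
  have hwv : G.Adj w v := by
    by_contra hc
    simpa [hc, huv] using congrFun h v
  exact Set.disjoint_left.mp hdisj hwu.symm hwv.symm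

end SimpleGraph

theorem stmt_0_general {V : Type*} [Fintype V] (G : SimpleGraph V)
    [DecidableRel G.Adj] (u v : V) (huv : G.Adj u v)
    (hdisj : G.neighborSet u ∩ G.neighborSet v = ∅) :
    (∀ i, (G.adjMatrix ℝ u + G.adjMatrix ℝ v) i = 0 ∨ (G.adjMatrix ℝ u + G.adjMatrix ℝ v) i = 1) ∧
    (∃ c : V → ℝ, Matrix.vecMul c (G.adjMatrix ℝ) = G.adjMatrix ℝ u + G.adjMatrix ℝ v) ∧
    (∀ i : V, G.adjMatrix ℝ u + G.adjMatrix ℝ v ≠ G.adjMatrix ℝ i) := by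
  classical
  have hdisj' := Set.disjoint_iff_inter_eq_empty.mpr hdisj
  exact ⟨G.adjMatrix_add_adjMatrix_apply_eq_zero_or_one hdisj',
    ⟨_, (G.adjMatrix ℝ).vecMul_single_one_add_single_one u v⟩,
    G.adjMatrix_add_adjMatrix_ne_adjMatrix huv hdisj'⟩

/-- If a simple connected graph `G` has two adjacent vertices `u, v` with disjoint
neighborhoods, then the sum of the rows of the adjacency matrix corresponding to `u` and `v`
is a `(0,1)`-vector lying in the row space of the adjacency matrix (over `ℝ`) which does
not occur as a row of the adjacency matrix. -/
theorem stmt_0 {V : Type*} [Fintype V] [DecidableEq V] (G : SimpleGraph V)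
    [DecidableRel G.Adj] (hG : G.Connected) (u v : V) (huv : G.Adj u v)
    (hdisj : G.neighborSet u ∩ G.neighborSet v = ∅) :
    (∀ i, (G.adjMatrix ℝ u + G.adjMatrix ℝ v) i = 0 ∨ (G.adjMatrix ℝ u + G.adjMatrix ℝ v) i = 1) ∧
    (∃ c : V → ℝ, Matrix.vecMul c (G.adjMatrix ℝ) = G.adjMatrix ℝ u + G.adjMatrix ℝ v) ∧
    (∀ i : V, G.adjMatrix ℝ u + G.adjMatrix ℝ v ≠ G.adjMatrix ℝ i) :=
  stmt_0_general G u v huv hdisj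
end

section
/- Let Γ be a simple connected graph with diameter at least 4. Then there exists a non-zero (0,1)-vector in the row space of the adjacency matrix A(Γ) over the reals which does not occur as a row of A(Γ). -/
open SimpleGraph

private lemma distA {V : Type*} {G : SimpleGraph V} (hG : G.Connected) :
    ∀ {u v : V} (p : G.Walk u v) (i : ℕ), G.dist u (p.getVert i) ≤ i := by
  intro u v p
  induction p with
  | nil => intro i; simp [Walk.getVert, SimpleGraph.dist_self]
  | @cons u b v h q ih =>
    intro i
    cases i with
    | zero => simp
    | succ n =>
      rw [Walk.getVert_cons_succ]
      calc G.dist u (q.getVert n) ≤ G.dist u b + G.dist b (q.getVert n) :=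
            hG.dist_triangle
        _ ≤ n + 1 := by
            have h1 : G.dist u b = 1 := SimpleGraph.dist_eq_one_iff_adj.mpr h
            have h2 := ih n
            omega

private lemma distB {V : Type*} {G : SimpleGraph V} :
    ∀ {u v : V} (p : G.Walk u v) (j : ℕ), G.dist (p.getVert j) v ≤ p.length - j := by
  intro u v p
  induction p with
  | nil => intro j; simp [Walk.getVert, SimpleGraph.dist_self]
  | @cons u b v h q ih =>
    intro j
    cases j with
    | zero => simpa using SimpleGraph.dist_le (Walk.cons h q)
    | succ n =>
      rw [Walk.getVert_cons_succ]
      have := ih n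
      simp only [Walk.length_cons]
      omega

private lemma distLB {V : Type*} {G : SimpleGraph V} (hG : G.Connected) {u v : V}
    (p : G.Walk u v) (hp : p.length = G.dist u v) (i j : ℕ) (hj : j ≤ p.length) :
    j - i ≤ G.dist (p.getVert i) (p.getVert j) := by
  have t1 : G.dist u v ≤ G.dist u (p.getVert i) + G.dist (p.getVert i) v :=
    hG.dist_triangle
  have t2 : G.dist (p.getVert i) v ≤ G.dist (p.getVert i) (p.getVert j) +
      G.dist (p.getVert j) v := hG.dist_triangle
  have hA := distA hG p i
  have hB := distB p j
  omega

/-- If `G` is a simple connected graph with diameter at least 4, then there is a non-zero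
`(0,1)`-vector in the row space of the adjacency matrix (over `ℝ`) which does not occur
as a row of the adjacency matrix. -/
theorem stmt_1 {V : Type*} [Fintype V] [DecidableEq V] (G : SimpleGraph V)
    [DecidableRel G.Adj] (hG : G.Connected) (hdiam : 4 ≤ G.diam) :
    ∃ x : V → ℝ, x ≠ 0 ∧ (∀ i, x i = 0 ∨ x i = 1) ∧
      (∃ c : V → ℝ, Matrix.vecMul c (G.adjMatrix ℝ) = x) ∧
      (∀ i : V, x ≠ G.adjMatrix ℝ i) := by
  have : Nonempty V := hG.nonempty
  obtain ⟨u, v, huv⟩ := G.exists_dist_eq_diam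
  have hd : 4 ≤ G.dist u v := huv ▸ hdiam
  obtain ⟨p, hp⟩ := exists_walk_of_dist_ne_zero (by omega : G.dist u v ≠ 0)
  have hlen : 4 ≤ p.length := by omega
  have h03 := distLB hG p hp 0 3 (by omega)
  have h13 := distLB hG p hp 1 3 (by omega)
  have h14 := distLB hG p hp 1 4 (by omega)
  have h04 := distLB hG p hp 0 4 (by omega)
  have a01 : G.Adj (p.getVert 0) (p.getVert 1) := p.adj_getVert_succ (by omega)
  have a34 : G.Adj (p.getVert 3) (p.getVert 4) := p.adj_getVert_succ (by omega)
  have n31 : ¬ G.Adj (p.getVert 3) (p.getVert 1) := by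
    intro h
    have := SimpleGraph.dist_eq_one_iff_adj.mpr h.symm
    omega
  have n04 : ¬ G.Adj (p.getVert 0) (p.getVert 4) := by
    intro h
    have := SimpleGraph.dist_eq_one_iff_adj.mpr h
    omega
  have nocommon : ∀ i : V, ¬ (G.Adj (p.getVert 0) i ∧ G.Adj (p.getVert 3) i) := by
    rintro i ⟨h1, h2⟩
    have t : G.dist (p.getVert 0) (p.getVert 3) ≤ G.dist (p.getVert 0) i + G.dist i (p.getVert 3) :=
      hG.dist_triangle
    have e1 : G.dist (p.getVert 0) i = 1 := SimpleGraph.dist_eq_one_iff_adj.mpr h1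
    have e2 : G.dist i (p.getVert 3) = 1 := SimpleGraph.dist_eq_one_iff_adj.mpr h2.symm
    omega
  refine ⟨fun i => G.adjMatrix ℝ (p.getVert 0) i + G.adjMatrix ℝ (p.getVert 3) i, ?_, ?_, ?_, ?_⟩
  · intro h0
    have := congrFun h0 (p.getVert 1)
    simp only [SimpleGraph.adjMatrix_apply, Pi.zero_apply] at this
    rw [if_pos a01, if_neg n31] at this
    norm_num at this
  · intro i
    rcases em (G.Adj (p.getVert 0) i) with h1 | h1 <;> rcases em (G.Adj (p.getVert 3) i) with h2 | h2
    · exact absurd ⟨h1, h2⟩ (nocommon i)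
    · right
      simp only [SimpleGraph.adjMatrix_apply]
      rw [if_pos h1, if_neg h2]; norm_num
    · right
      simp only [SimpleGraph.adjMatrix_apply]
      rw [if_neg h1, if_pos h2]; norm_num
    · left
      simp only [SimpleGraph.adjMatrix_apply]
      rw [if_neg h1, if_neg h2]; norm_num
  · refine ⟨Pi.single (p.getVert 0) 1 + Pi.single (p.getVert 3) 1, ?_⟩
    rw [Matrix.add_vecMul, Matrix.single_one_vecMul, Matrix.single_one_vecMul]
    rfl
  · intro z hz
    have h1 := congrFun hz (p.getVert 1)
    have h4 := congrFun hz (p.getVert 4)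
    simp only [SimpleGraph.adjMatrix_apply] at h1 h4
    rw [if_pos a01, if_neg n31] at h1
    rw [if_neg n04, if_pos a34] at h4
    have hz1 : G.Adj z (p.getVert 1) := by
      by_contra hc
      rw [if_neg hc] at h1; norm_num at h1
    have hz4 : G.Adj z (p.getVert 4) := by
      by_contra hc
      rw [if_neg hc] at h4; norm_num at h4
    have t : G.dist (p.getVert 1) (p.getVert 4) ≤ G.dist (p.getVert 1) z + G.dist z (p.getVert 4) :=
      hG.dist_triangle
    have e1 : G.dist (p.getVert 1) z = 1 := SimpleGraph.dist_eq_one_iff_adj.mpr hz1.symm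
    have e2 : G.dist z (p.getVert 4) = 1 := SimpleGraph.dist_eq_one_iff_adj.mpr hz4
    omega
end

section
/- Let Γ be a simple connected graph with a vertex v of degree 1. Then there exists a non-zero (0,1)-vector in the row space of A(Γ) over the reals which does not occur as a row of A(Γ). -/
open SimpleGraph

/-- If a simple connected graph `G` has a vertex of degree 1, then there exists a non-zero
`(0,1)`-vector in the row space of the adjacency matrix (over `ℝ`) which does not occur
as a row of the adjacency matrix. -/
theorem stmt_5 {V : Type*} [Fintype V] [DecidableEq V] (G : SimpleGraph V)
    [DecidableRel G.Adj] (hG : G.Connected) (v : V) (hv : G.degree v = 1) :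
    ∃ x : V → ℝ, x ≠ 0 ∧ (∀ i, x i = 0 ∨ x i = 1) ∧
      (∃ c : V → ℝ, Matrix.vecMul c (G.adjMatrix ℝ) = x) ∧
      (∀ i : V, x ≠ G.adjMatrix ℝ i) := by
  -- v has a unique neighbor w
  obtain ⟨w, hvw⟩ := (G.degree_pos_iff_exists_adj (v := v)).mp (by omega)
  have hN : G.neighborFinset v = {w} := by
    apply Finset.eq_singleton_iff_unique_mem.mpr
    refine ⟨(G.mem_neighborFinset v w).mpr hvw, ?_⟩
    intro u hu
    by_contra hne
    have : 2 ≤ G.degree v := by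
      have : ({u, w} : Finset V) ⊆ G.neighborFinset v :=
        Finset.insert_subset hu
          (Finset.singleton_subset_iff.mpr ((G.mem_neighborFinset v w).mpr hvw))
      calc 2 = ({u, w} : Finset V).card := (Finset.card_pair hne).symm
        _ ≤ _ := Finset.card_le_card this
    omega
  have hadj : ∀ i, G.Adj v i ↔ i = w := by
    intro i
    rw [← G.mem_neighborFinset, hN, Finset.mem_singleton]
  -- x = row v + row w
  set M := G.adjMatrix ℝ with hM
  refine ⟨fun i => M v i + M w i, ?_, ?_, ?_, ?_⟩
  · intro h
    have := congrFun h w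
    simp [hM, hvw, G.irrefl] at this
  · intro i
    by_cases hiw : i = w
    · subst hiw
      right; simp [hM, hvw, G.irrefl]
    · have h1 : ¬ G.Adj v i := fun h => hiw ((hadj i).mp h)
      by_cases h2 : G.Adj w i
      · right; simp [hM, h1, h2]
      · left; simp [hM, h1, h2]
  · refine ⟨Pi.single v 1 + Pi.single w 1, ?_⟩
    rw [Matrix.add_vecMul, Matrix.single_one_vecMul, Matrix.single_one_vecMul]
    rfl
  · intro u h
    have hw := congrFun h w
    simp [hM, hvw, G.irrefl] at hw
    -- hw : G.Adj u w (since value 1 ≠ 0)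
    have huw : G.Adj u w := by
      by_contra hc
      simp [hc] at hw
    have hunew : u ≠ w := fun e => G.irrefl (e ▸ huw)
    have hu := congrFun h u
    have h1 : ¬ G.Adj v u := fun hh => hunew ((hadj u).mp hh)
    have h2 : G.Adj w u := huw.symm
    simp [hM, h1, h2, G.irrefl] at hu
end

section
/- Let T be a tree with at least one edge. Then there exists a non-zero (0,1)-vector in the row space of the adjacency matrix A(T) over the reals which does not occur as a row of A(T). -/
open SimpleGraph

/-- If `T` is a tree with at least one edge (equivalently, at least two vertices), then
there exists a non-zero `(0,1)`-vector in the row space of the adjacency matrix (over `ℝ`)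
which does not occur as a row of the adjacency matrix. -/
theorem stmt_6 {V : Type*} [Fintype V] [DecidableEq V] (T : SimpleGraph V)
    [DecidableRel T.Adj] (hT : T.IsTree) (hcard : 1 < Fintype.card V) :
    ∃ x : V → ℝ, x ≠ 0 ∧ (∀ i, x i = 0 ∨ x i = 1) ∧
      (∃ c : V → ℝ, Matrix.vecMul c (T.adjMatrix ℝ) = x) ∧
      (∀ i : V, x ≠ T.adjMatrix ℝ i) := by
  -- Trees are triangle-free.
  have tri : ∀ {a b c : V}, T.Adj a b → T.Adj b c → T.Adj c a → False := by
    intro a b c hab hbc hca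
    refine hT.IsAcyclic (Walk.cons hab (Walk.cons hbc (Walk.cons hca Walk.nil))) ?_
    simp [Walk.isCycle_def, Walk.isTrail_def, hab.ne, hbc.ne, hca.ne, hab.ne', hbc.ne', hca.ne',
      Sym2.eq_iff]
  -- find an edge
  obtain ⟨u, v, huv⟩ := Fintype.exists_pair_of_one_lt_card hcard
  obtain ⟨p⟩ := hT.isConnected.preconnected u v
  obtain ⟨b, hub, -⟩ : ∃ b, T.Adj u b ∧ True := by
    cases p with
    | nil => exact absurd rfl huv
    | cons h q => exact ⟨_, h, trivial⟩
  clear p huv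
  set A := T.adjMatrix ℝ with hA
  -- take x = row(u) + row(b); it is 0-1 since no common neighbor of u and b exists
  refine ⟨fun j => A u j + A b j, ?_, ?_, ?_, ?_⟩
  · intro h
    have := congrFun h b
    simp [hA, hub, hub.ne] at this
  · intro i
    by_cases h1 : T.Adj u i <;> by_cases h2 : T.Adj b i
    · exact absurd (tri hub h2 h1.symm) (fun f => f)
    all_goals simp [hA, h1, h2]
  · refine ⟨Pi.single u 1 + Pi.single b 1, ?_⟩
    rw [Matrix.add_vecMul]
    ext j
    simp [Matrix.single_one_vecMul]
  · intro i h
    have h1 := congrFun h b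
    have h2 := congrFun h u
    simp [hA, hub, hub.symm, hub.ne, hub.ne'] at h1 h2
    have hib : T.Adj i b := by
      by_contra hc; simp [hc] at h1
    have hiu : T.Adj i u := by
      by_contra hc; simp [hc] at h2
    exact tri hiu hub hib.symm
end

section
/- Let Γ be a simple non-complete graph on n vertices with exactly one dominating vertex and all other vertices of equal degree d with 1 ≤ d ≤ n-2. Then the all-ones vector is a non-zero (0,1)-vector in the row space of A(Γ) over the reals which does not occur as a row of A(Γ). -/
open SimpleGraph Finset

/-- Let `G` be a simple non-complete graph with exactly one dominating vertex `v₁`, all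
other vertices having degree `d` with `1 ≤ d ≤ n - 2` where `n` is the number of vertices.
Then the all-ones vector is a non-zero `(0,1)`-vector in the row space of the adjacency
matrix over `ℝ` which does not occur as a row of the adjacency matrix. -/
theorem stmt_10 {V : Type*} [Fintype V] [DecidableEq V] (G : SimpleGraph V)
    [DecidableRel G.Adj] (v₁ : V) (d : ℕ)
    (hnc : G ≠ ⊤)
    (hdom : ∀ w : V, w ≠ v₁ → G.Adj v₁ w)
    (huniq : ∀ u : V, (∀ w : V, w ≠ u → G.Adj u w) → u = v₁)
    (hdeg : ∀ i : V, i ≠ v₁ → G.degree i = d)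
    (hd1 : 1 ≤ d) (hd2 : d ≤ Fintype.card V - 2) :
    (fun _ : V => (1 : ℝ)) ≠ 0 ∧
    (∃ c : V → ℝ, Matrix.vecMul c (G.adjMatrix ℝ) = fun _ : V => (1 : ℝ)) ∧
    (∀ i : V, (fun _ : V => (1 : ℝ)) ≠ G.adjMatrix ℝ i) := by
  have hn3 : 3 ≤ Fintype.card V := by omega
  have hnR : ((Fintype.card V : ℝ) - 1) ≠ 0 := by
    have : (3:ℝ) ≤ (Fintype.card V : ℝ) := by exact_mod_cast hn3
    linarith
  have hNv₁ : G.neighborFinset v₁ = Finset.univ.erase v₁ := by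
    ext w
    simp only [mem_neighborFinset, Finset.mem_erase, Finset.mem_univ, and_true]
    exact ⟨fun h => (G.ne_of_adj h).symm, fun h => hdom w h⟩
  refine ⟨?_, ?_, ?_⟩
  · intro h
    have := congrFun h v₁
    norm_num at this
  · set b : ℝ := 1 / ((Fintype.card V : ℝ) - 1) with hb
    set x : ℝ := 1 - ((d : ℝ) - 1) * b with hx
    refine ⟨fun w => if w = v₁ then x else b, ?_⟩
    funext j
    rw [SimpleGraph.adjMatrix_vecMul_apply]
    by_cases hj : j = v₁
    · subst hj
      rw [hNv₁]
      rw [Finset.sum_congr rfl (fun w hw => if_neg (Finset.mem_erase.mp hw).1)]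
      rw [Finset.sum_const, Finset.card_erase_of_mem (Finset.mem_univ _),
        Finset.card_univ, nsmul_eq_mul]
      have hcast : ((Fintype.card V - 1 : ℕ) : ℝ) = (Fintype.card V : ℝ) - 1 := by
        have : 1 ≤ Fintype.card V := by omega
        push_cast [this]; ring
      rw [hcast, hb]
      field_simp
    · have hmem : v₁ ∈ G.neighborFinset j := by
        rw [mem_neighborFinset]
        exact (hdom j hj).symm
      rw [← Finset.add_sum_erase _ _ hmem, if_pos rfl]
      rw [Finset.sum_congr rfl (fun w hw => if_neg (Finset.mem_erase.mp hw).1)]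
      rw [Finset.sum_const, Finset.card_erase_of_mem hmem, nsmul_eq_mul]
      have hcard : (G.neighborFinset j).card = d := by
        rw [G.card_neighborFinset_eq_degree]
        exact hdeg j hj
      rw [hcard]
      have hcast : ((d - 1 : ℕ) : ℝ) = (d : ℝ) - 1 := by
        push_cast [hd1]; ring
      rw [hcast, hx]
      ring
  · intro i h
    have := congrFun h i
    simp at this
end

section
/- Let Γ be a simple graph on vertex set {v_1,...,v_n} and m = (m_1,...,m_n) a vector of positive integers. If a (0,1)-vector (x_1,...,x_n) lies in the row space of A(Γ) over ℝ, then the blown-up vector (x_1 repeated m_1 times, x_2 repeated m_2 times, ..., x_n repeated m_n times) lies in the row space of A(Γ⊙m) over ℝ, where Γ⊙m is the graph obtained from Γ by multiplication of vertices. -/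
open SimpleGraph

/-- The graph `Γ ⊙ m` obtained from `Γ` by multiplication of vertices: each vertex `v` is
replaced by an independent set of `m v` vertices, and a copy of `v` is adjacent to a copy
of `w` iff `v` and `w` are adjacent in `Γ`. -/
def blowup {V : Type*} (G : SimpleGraph V) (m : V → ℕ) :
    SimpleGraph (Σ v : V, Fin (m v)) :=
  SimpleGraph.comap Sigma.fst G

instance {V : Type*} (G : SimpleGraph V) [DecidableRel G.Adj] (m : V → ℕ) :
    DecidableRel (blowup G m).Adj :=
  fun a b => inferInstanceAs (Decidable (G.Adj a.1 b.1))

/-- If a `(0,1)`-vector `x` lies in the row space of the adjacency matrix of `Γ` over `ℝ`,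
then the blown-up vector (`x v` repeated `m v` times for each vertex `v`) lies in the row
space of the adjacency matrix of `Γ ⊙ m` over `ℝ`. -/
theorem stmt_11 {V : Type*} [Fintype V] [DecidableEq V] (G : SimpleGraph V)
    [DecidableRel G.Adj] (m : V → ℕ) (hm : ∀ v, 0 < m v) (x : V → ℝ)
    (h01 : ∀ i, x i = 0 ∨ x i = 1)
    (hx : ∃ c : V → ℝ, Matrix.vecMul c (G.adjMatrix ℝ) = x) :
    ∃ c : (Σ v : V, Fin (m v)) → ℝ,
      Matrix.vecMul c ((blowup G m).adjMatrix ℝ) = fun p => x p.1 := by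
  obtain ⟨c, hc⟩ := hx
  refine ⟨fun p => c p.1 / (m p.1), ?_⟩
  funext p
  have := congrFun hc p.1
  simp only [Matrix.vecMul, dotProduct, adjMatrix_apply] at this ⊢
  rw [← Finset.univ_sigma_univ, Finset.sum_sigma]
  calc (∑ v : V, ∑ _i : Fin (m v),
        c v / (m v) * if (blowup G m).Adj ⟨v, _i⟩ p then 1 else 0)
      = ∑ v : V, c v * if G.Adj v p.1 then 1 else 0 := by
        refine Finset.sum_congr rfl fun v _ => ?_
        have hAdj : ∀ i : Fin (m v),
            ((blowup G m).Adj ⟨v, i⟩ p) = G.Adj v p.1 := fun i => rfl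
        simp only [hAdj, Finset.sum_const, Finset.card_univ, Fintype.card_fin,
          nsmul_eq_mul]
        have hmv : (m v : ℝ) ≠ 0 := Nat.cast_ne_zero.mpr (hm v).ne'
        field_simp
    _ = x p.1 := this
end

section
/- For any simple graph Γ and vector of positive integers m, the rank of the adjacency matrix of Γ⊙m over ℝ equals the rank of the adjacency matrix of Γ over ℝ. -/
open SimpleGraph

/-! The adjacency matrix of `Γ ⊙ m` is that of `Γ` with every row and column of `v` repeated
`m v` times. Repeating rows and columns cannot raise the rank, and when every `m v` is positive
the original matrix reappears as a submatrix, so the rank cannot drop either. -/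

theorem Matrix.rank_submatrix_of_surjective {R m n m₀ n₀ : Type*} [CommSemiring R]
    [StrongRankCondition R] [Fintype n] [Fintype n₀] (A : Matrix m n R) {r : m₀ → m}
    {c : n₀ → n} (hr : Function.Surjective r) (hc : Function.Surjective c) :
    (A.submatrix r c).rank = A.rank := by
  refine le_antisymm (A.rank_submatrix_le r c) ?_
  have hA : (A.submatrix r c).submatrix (Function.surjInv hr) (Function.surjInv hc) = A := by
    ext i j
    simp [Function.surjInv_eq]
  simpa only [hA] using
    (A.submatrix r c).rank_submatrix_le (Function.surjInv hr) (Function.surjInv hc)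

theorem adjMatrix_blowup {V α : Type*} [Zero α] [One α] (G : SimpleGraph V) [DecidableRel G.Adj]
    (m : V → ℕ) : (blowup G m).adjMatrix α = (G.adjMatrix α).submatrix Sigma.fst Sigma.fst := by
  ext a b
  simp only [adjMatrix_apply, Matrix.submatrix_apply]
  rfl

theorem sigma_fst_surjective {V : Type*} {m : V → ℕ} (hm : ∀ w, 0 < m w) :
    Function.Surjective (Sigma.fst : (Σ v : V, Fin (m v)) → V) :=
  fun v => ⟨⟨v, ⟨0, hm v⟩⟩, rfl⟩

theorem stmt_15_general {V : Type*} [Fintype V] (G : SimpleGraph V)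
    [DecidableRel G.Adj] (m : V → ℕ) (hm : ∀ w, 0 < m w) :
    ((blowup G m).adjMatrix ℝ).rank = (G.adjMatrix ℝ).rank := by
  rw [adjMatrix_blowup]
  exact Matrix.rank_submatrix_of_surjective _ (sigma_fst_surjective hm) (sigma_fst_surjective hm)

/-- For any simple graph `Γ` and any vector `m` of positive integers, the rank over `ℝ`
of the adjacency matrix of `Γ ⊙ m` equals that of the adjacency matrix of `Γ`. -/
theorem stmt_15 {V : Type*} [Fintype V] [DecidableEq V] (G : SimpleGraph V)
    [DecidableRel G.Adj] (m : V → ℕ) (hm : ∀ w, 0 < m w) :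
    ((blowup G m).adjMatrix ℝ).rank = (G.adjMatrix ℝ).rank :=
  stmt_15_general G m hm
end

section
/- The rank over ℝ of the adjacency matrix of the path P_n on n vertices is n if n is even, and n-1 if n is odd. -/
open SimpleGraph
open SimpleGraph Matrix Fin Module

instance pathDec (n : ℕ) : DecidableRel (pathGraph n).Adj :=
  fun _ _ => decidable_of_iff _ pathGraph_adj.symm

noncomputable def pm (n : ℕ) : Matrix (Fin n) (Fin n) ℝ := (pathGraph n).adjMatrix ℝ

lemma pm_apply (n : ℕ) (i j : Fin n) :
    pm n i j = if (i : ℕ) + 1 = j ∨ (j : ℕ) + 1 = i then 1 else 0 := by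
  simp [pm, adjMatrix_apply, pathGraph_adj]

lemma coe_succAbove {n : ℕ} (p : Fin (n+1)) (i : Fin n) :
    ((p.succAbove i : Fin (n+1)) : ℕ) = if (i:ℕ) < (p:ℕ) then (i:ℕ) else (i:ℕ)+1 := by
  rcases Nat.lt_or_ge (i:ℕ) (p:ℕ) with h | h
  · rw [Fin.succAbove_of_castSucc_lt _ _ (by simpa [Fin.lt_def])]
    simp [h]
  · rw [Fin.succAbove_of_le_castSucc _ _ (by simpa [Fin.le_def])]
    simp [Nat.not_lt.mpr h]

lemma pm_submatrix {m n : ℕ} (f g : Fin n → Fin m) (hf : ∀ k, (f k : ℕ) = k)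
    (hg : ∀ k, (g k : ℕ) = k) : (pm m).submatrix f g = pm n := by
  ext i j
  simp [pm_apply, hf, hg]

lemma det_step (n : ℕ) : (pm (n+2)).det = -(pm n).det := by
  have hrow : (pm (n+2)).det =
      - Matrix.det ((pm (n+2)).submatrix (Fin.last (n+1)).succAbove
        (Fin.castSucc (Fin.last n)).succAbove) := by
    rw [Matrix.det_succ_row (pm (n+2)) (Fin.last (n+1)),
      Finset.sum_eq_single (Fin.castSucc (Fin.last n))]
    · have h1 : pm (n+2) (Fin.last (n+1)) (Fin.castSucc (Fin.last n)) = 1 := by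
        rw [pm_apply, if_pos]
        simp
      have h2 : ((-1:ℝ)) ^ ((Fin.last (n+1) : ℕ) + ((Fin.castSucc (Fin.last n) : Fin (n+2)) : ℕ))
          = -1 := by
        simp only [Fin.val_last, Fin.coe_castSucc]
        rw [show n + 1 + n = 2*n + 1 by omega, pow_succ, pow_mul]
        norm_num
      rw [h1, h2]; ring
    · intro j _ hj
      have hj' : (j : ℕ) ≠ n := by
        intro h
        exact hj (by apply Fin.ext; simpa using h)
      have : pm (n+2) (Fin.last (n+1)) j = 0 := by
        rw [pm_apply, if_neg]
        simp only [Fin.val_last]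
        omega
      rw [this]; ring
    · intro h; exact absurd (Finset.mem_univ _) h
  set B := (pm (n+2)).submatrix (Fin.last (n+1)).succAbove
      (Fin.castSucc (Fin.last n)).succAbove with hBdef
  have hcol : B.det = (pm n).det := by
    rw [Matrix.det_succ_column B (Fin.last n), Finset.sum_eq_single (Fin.last n)]
    · have h1 : B (Fin.last n) (Fin.last n) = 1 := by
        rw [hBdef, Matrix.submatrix_apply, pm_apply, if_pos]
        left
        simp only [coe_succAbove, Fin.val_last, Fin.coe_castSucc]
        split_ifs <;> omega
      have h2 : ((-1:ℝ)) ^ ((Fin.last n : ℕ) + (Fin.last n : ℕ)) = 1 := by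
        simp only [Fin.val_last]
        rw [show n + n = 2*n by omega, pow_mul]
        norm_num
      have h3 : B.submatrix (Fin.last n).succAbove (Fin.last n).succAbove = pm n := by
        rw [hBdef, Matrix.submatrix_submatrix]
        apply pm_submatrix
        · intro k
          simp only [Function.comp_apply, coe_succAbove, Fin.val_last, Fin.coe_castSucc]
          have := k.isLt
          split_ifs <;> omega
        · intro k
          simp only [Function.comp_apply, coe_succAbove, Fin.val_last, Fin.coe_castSucc]
          have := k.isLt
          split_ifs <;> omega
      rw [h1, h2, h3]; ring
    · intro i _ hi
      have hi' : (i : ℕ) ≠ n := by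
        intro h
        exact hi (Fin.ext (by simpa using h))
      have : B i (Fin.last n) = 0 := by
        rw [hBdef, Matrix.submatrix_apply, pm_apply, if_neg]
        simp only [coe_succAbove, Fin.val_last, Fin.coe_castSucc]
        have := i.isLt
        split_ifs <;> omega
      rw [this]; ring
    · intro h; exact absurd (Finset.mem_univ _) h
  rw [hrow, hcol]

lemma det_even {n : ℕ} (hn : Even n) : (pm n).det = (-1)^(n/2) := by
  obtain ⟨k, rfl⟩ := hn
  induction k with
  | zero => simp [pm]
  | succ k ih =>
    have : k + 1 + (k + 1) = (k + k) + 2 := by omega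
    rw [this, det_step, ih]
    rw [show (k+k)/2 = k by omega, show (k+k+2)/2 = k+1 by omega, pow_succ]
    ring

lemma det_odd {n : ℕ} (hn : Odd n) : (pm n).det = 0 := by
  obtain ⟨k, rfl⟩ := hn
  induction k with
  | zero =>
    rw [show 2*0+1 = 1 by rfl]
    rw [show (pm 1).det = pm 1 0 0 from Matrix.det_fin_one _, pm_apply]
    norm_num
  | succ k ih =>
    have : 2*(k+1) + 1 = (2*k+1) + 2 := by omega
    rw [this, det_step, ih, neg_zero]

lemma rank_even {n : ℕ} (hn : Even n) : (pm n).rank = n := by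
  have hu : IsUnit (pm n) := by
    rw [Matrix.isUnit_iff_isUnit_det, det_even hn]
    exact (isUnit_one.neg).pow _
  rw [Matrix.rank_of_isUnit _ hu, Fintype.card_fin]

lemma rank_le_pred {n : ℕ} (hn : Odd n) : (pm n).rank ≤ n - 1 := by
  obtain ⟨v, hv0, hv⟩ := (Matrix.exists_mulVec_eq_zero_iff).mpr (det_odd hn)
  have hker : v ∈ LinearMap.ker (pm n).mulVecLin := by
    simpa [Matrix.mulVecLin_apply] using hv
  have hkrank : 1 ≤ finrank ℝ (LinearMap.ker (pm n).mulVecLin) := by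
    by_contra h
    have h0 : finrank ℝ (LinearMap.ker (pm n).mulVecLin) = 0 := by omega
    rw [Submodule.finrank_eq_zero] at h0
    rw [h0, Submodule.mem_bot] at hker
    exact hv0 hker
  have hrn := LinearMap.finrank_range_add_finrank_ker (pm n).mulVecLin
  rw [Module.finrank_fintype_fun_eq_card, Fintype.card_fin] at hrn
  have : (pm n).rank = finrank ℝ (LinearMap.range (pm n).mulVecLin) := rfl
  omega

lemma pred_le_rank (m : ℕ) : (pm m).rank ≤ (pm (m+1)).rank := by
  have hsub : (pm (m+1)).submatrix Fin.castSucc Fin.castSucc = pm m :=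
    pm_submatrix _ _ (fun k => rfl) (fun k => rfl)
  have h1 : ((1 : Matrix (Fin (m+1)) (Fin (m+1)) ℝ).submatrix
      (Fin.castSucc : Fin m → Fin (m+1)) (Equiv.refl (Fin (m+1)))) * pm (m+1)
      = (pm (m+1)).submatrix Fin.castSucc id := by
    rw [Matrix.one_submatrix_mul]
    rfl
  have h2 : (pm (m+1)).submatrix Fin.castSucc id *
      ((1 : Matrix (Fin (m+1)) (Fin (m+1)) ℝ).submatrix (Equiv.refl (Fin (m+1)))
        (Fin.castSucc : Fin m → Fin (m+1))) = pm m := by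
    rw [Matrix.mul_submatrix_one]
    rw [← hsub]
    rfl
  calc (pm m).rank
      = (((1 : Matrix (Fin (m+1)) (Fin (m+1)) ℝ).submatrix
          (Fin.castSucc : Fin m → Fin (m+1)) (Equiv.refl (Fin (m+1)))) * pm (m+1) *
        ((1 : Matrix (Fin (m+1)) (Fin (m+1)) ℝ).submatrix (Equiv.refl (Fin (m+1)))
          (Fin.castSucc : Fin m → Fin (m+1)))).rank := by rw [h1, h2]
    _ ≤ (((1 : Matrix (Fin (m+1)) (Fin (m+1)) ℝ).submatrix
          (Fin.castSucc : Fin m → Fin (m+1)) (Equiv.refl (Fin (m+1)))) * pm (m+1)).rank :=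
        Matrix.rank_mul_le_left _ _
    _ ≤ (pm (m+1)).rank := Matrix.rank_mul_le_right _ _

/-- The rank over `ℝ` of the adjacency matrix of the path `P_n` on `n` vertices is `n`
if `n` is even and `n - 1` if `n` is odd. -/
theorem stmt_16 (n : ℕ) [DecidableRel (pathGraph n).Adj] :
    ((pathGraph n).adjMatrix ℝ).rank = if Even n then n else n - 1 := by
  have hpm : (pathGraph n).adjMatrix ℝ = pm n := by
    ext i j
    by_cases h : (pathGraph n).Adj i j <;> simp [pm, h]
  rw [hpm]
  rcases Nat.even_or_odd n with hn | hn
  · rw [if_pos hn, rank_even hn]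
  · rw [if_neg (by simpa [Nat.not_even_iff_odd] using hn)]
    obtain ⟨m, rfl⟩ : ∃ m, n = m + 1 := ⟨n - 1, by rcases hn with ⟨k, hk⟩; omega⟩
    refine le_antisymm (by simpa using rank_le_pred hn) ?_
    have hm : Even m := by simpa using Nat.Odd.sub_odd hn odd_one
    calc m + 1 - 1 = (pm m).rank := by rw [rank_even hm]; omega
      _ ≤ (pm (m+1)).rank := pred_le_rank m
end

section
/- The rank over ℝ of the adjacency matrix of the cycle C_n on n vertices (n ≥ 3) is n-2 if n is divisible by 4, and n otherwise. -/
/-!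
Since `(A v)ᵢ = vᵢ₋₁ + vᵢ₊₁`, a vector `v` lies in the kernel of the adjacency matrix of `C_n`
exactly when `vᵢ₊₂ = -vᵢ` for all `i ∈ ℤ/n`, and such a `v` is determined by `(v₀, v₁)`.
If `4 ∤ n`, some odd multiple of `2` vanishes modulo `n`, which forces `v = -v`, so the kernel is
trivial. If `4 ∣ n`, every pair `(a, b)` extends to the `4`-periodic pattern `a, b, -a, -b, …`,
so the kernel has dimension `2`. Rank–nullity finishes the proof.
-/

open Function SimpleGraph Matrix Module

theorem Function.Antiperiodic.eq_zero_of_nsmul_eq_zero {α β : Type*} [AddMonoid α] [NonAssocRing β]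
    [NoZeroDivisors β] [CharZero β] {f : α → β} {c : α} (hf : Antiperiodic f c) {k : ℕ}
    (hk : Odd k) (hkc : k • c = 0) : f = 0 := by
  obtain ⟨m, rfl⟩ := hk
  funext x
  exact CharZero.eq_neg_self_iff.1 (by simpa [hkc] using hf.odd_nsmul_antiperiodic m x)

theorem ZMod.natCast_mod_of_dvd {n d : ℕ} (hd : d ∣ n) (a : ℕ) : ((a % n : ℕ) : ZMod d) = a := by
  rw [← ZMod.natCast_mod _ d, Nat.mod_mod_of_dvd _ hd, ZMod.natCast_mod]

namespace Fin
open Fin.CommRing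

theorem exists_odd_nsmul_two_eq_zero {n : ℕ} [NeZero n] (hn : ¬ 4 ∣ n) :
    ∃ k : ℕ, Odd k ∧ k • (2 : Fin n) = 0 := by
  obtain ⟨k, hk, hnk⟩ : ∃ k : ℕ, Odd k ∧ n ∣ 2 * k := by
    rcases Nat.even_or_odd' n with ⟨k, rfl | rfl⟩
    · exact ⟨k, Nat.odd_iff.2 (by omega), dvd_rfl⟩
    · exact ⟨2 * k + 1, odd_two_mul_add_one k, dvd_mul_left _ 2⟩
  refine ⟨k, hk, ?_⟩
  have h : ((2 * k : ℕ) : Fin n) = 0 := natCast_eq_zero.2 hnk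
  rwa [nsmul_eq_mul, mul_comm, ← Nat.cast_ofNat, ← Nat.cast_mul]

theorem exists_eq_nsmul_two_or_eq_one_add_nsmul_two {n : ℕ} [NeZero n] (i : Fin n) :
    ∃ k : ℕ, i = k • 2 ∨ i = 1 + k • 2 := by
  obtain ⟨k, hk | hk⟩ := Nat.even_or_odd' i.val
  · exact ⟨k, .inl <| by rw [← cast_val_eq_self i, hk]; push_cast; ring⟩
  · exact ⟨k, .inr <| by rw [← cast_val_eq_self i, hk]; push_cast; ring⟩

theorem eq_zero_of_antiperiodic_two {n : ℕ} [NeZero n] {β : Type*} [AddGroup β] {f : Fin n → β}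
    (hf : Antiperiodic f 2) (h0 : f 0 = 0) (h1 : f 1 = 0) : f = 0 := by
  funext i
  obtain ⟨k, rfl | rfl⟩ := exists_eq_nsmul_two_or_eq_one_add_nsmul_two i
  · simpa [h0] using hf.add_nsmul_eq (x := 0) k
  · simpa [h1] using hf.add_nsmul_eq (x := 1) k

theorem exists_antiperiodic_two {n : ℕ} [NeZero n] (hn : 4 ∣ n) {β : Type*} [InvolutiveNeg β]
    (a b : β) : ∃ f : Fin n → β, Antiperiodic f 2 ∧ f 0 = a ∧ f 1 = b := by
  let w : ZMod 4 → β := ![a, b, -a, -b]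
  have hw : Antiperiodic w 2 := by
    intro x; fin_cases x <;> simp [w] <;> rfl
  refine ⟨fun i => w i.val, fun i => ?_, by simp [w], ?_⟩
  · simp only [Fin.val_add, ZMod.natCast_mod_of_dvd hn, Nat.cast_add]
    simp [ZMod.natCast_mod_of_dvd hn 2, hw _]
  · simp [ZMod.natCast_mod_of_dvd hn 1, w]

end Fin

namespace SimpleGraph
open Fin.CommRing
variable {R : Type*} (n : ℕ) [DecidableRel (cycleGraph (n + 3)).Adj]

theorem cycleGraph_adjMatrix_mulVec_apply [NonAssocSemiring R] (v : Fin (n + 3) → R)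
    (i : Fin (n + 3)) : ((cycleGraph (n + 3)).adjMatrix R *ᵥ v) i = v (i - 1) + v (i + 1) := by
  have hne : i - 1 ≠ i + 1 := by
    intro h
    have h2 : (2 : Fin (n + 3)) = 0 := by linear_combination -h
    simp [Fin.ext_iff, Nat.mod_eq_of_lt (show 2 < n + 3 by omega)] at h2
  rw [adjMatrix_mulVec_apply, ← Finset.sum_pair hne]
  congr 1
  convert cycleGraph_neighborFinset (n := n + 1) (v := i) using 2

theorem cycleGraph_adjMatrix_mulVec_eq_zero_iff [Ring R] (v : Fin (n + 3) → R) :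
    (cycleGraph (n + 3)).adjMatrix R *ᵥ v = 0 ↔ Antiperiodic v 2 := by
  simp only [funext_iff, Pi.zero_apply, cycleGraph_adjMatrix_mulVec_apply]
  constructor
  · intro h i
    have := h (i + 1)
    rw [add_sub_cancel_right, show i + 1 + 1 = i + 2 by ring] at this
    exact eq_neg_of_add_eq_zero_right this
  · intro h i
    rw [show i + 1 = i - 1 + 2 by ring, h, add_neg_cancel]

variable {K : Type*} [Field K]

theorem cycleGraph_ker_adjMatrix_mulVecLin_eq_bot [CharZero K] (hn : ¬ 4 ∣ n + 3) :
    LinearMap.ker ((cycleGraph (n + 3)).adjMatrix K).mulVecLin = ⊥ := by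
  refine LinearMap.ker_eq_bot'.2 fun v hv => ?_
  rw [mulVecLin_apply, cycleGraph_adjMatrix_mulVec_eq_zero_iff] at hv
  obtain ⟨k, hk, hk2⟩ := Fin.exists_odd_nsmul_two_eq_zero hn
  exact hv.eq_zero_of_nsmul_eq_zero hk hk2

theorem finrank_cycleGraph_ker_adjMatrix_mulVecLin (hn : 4 ∣ n + 3) :
    finrank K (LinearMap.ker ((cycleGraph (n + 3)).adjMatrix K).mulVecLin) = 2 := by
  set V := LinearMap.ker ((cycleGraph (n + 3)).adjMatrix K).mulVecLin
  have hV (v : Fin (n + 3) → K) : v ∈ V ↔ Antiperiodic v 2 := by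
    rw [LinearMap.mem_ker, mulVecLin_apply, cycleGraph_adjMatrix_mulVec_eq_zero_iff]
  let π : V →ₗ[K] K × K := ((LinearMap.proj 0).prod (LinearMap.proj 1)).comp V.subtype
  have hπ : Bijective π := by
    refine ⟨(injective_iff_map_eq_zero π).2 fun v hv => ?_, fun ⟨a, b⟩ => ?_⟩
    · simp only [π, LinearMap.coe_comp, Submodule.coe_subtype, Function.comp_apply,
        LinearMap.prod_apply, LinearMap.coe_proj, Function.prod_apply, eval, Prod.mk_eq_zero] at hv
      exact Subtype.ext (Fin.eq_zero_of_antiperiodic_two ((hV v).1 v.2) hv.1 hv.2)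
    · obtain ⟨f, hf, hf0, hf1⟩ := Fin.exists_antiperiodic_two hn a b
      exact ⟨⟨f, (hV f).2 hf⟩, by simp [π, hf0, hf1]⟩
  rw [(LinearEquiv.ofBijective π hπ).finrank_eq, finrank_prod, finrank_self]

end SimpleGraph

theorem Matrix.rank_add_finrank_ker_mulVecLin {K m n : Type*} [Field K] [Fintype n]
    (A : Matrix m n K) : A.rank + finrank K (LinearMap.ker A.mulVecLin) = Fintype.card n := by
  rw [Matrix.rank, LinearMap.finrank_range_add_finrank_ker, finrank_fintype_fun_eq_card]

/-- The rank over `ℝ` of the adjacency matrix of the cycle `C_n` on `n ≥ 3` vertices is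
`n - 2` if `4 ∣ n` and `n` otherwise. -/
theorem stmt_17 (n : ℕ) (hn : 3 ≤ n) [DecidableRel (cycleGraph n).Adj] :
    ((cycleGraph n).adjMatrix ℝ).rank = if 4 ∣ n then n - 2 else n := by
  obtain ⟨m, rfl⟩ : ∃ m, n = m + 3 := ⟨n - 3, by omega⟩
  have h := ((cycleGraph (m + 3)).adjMatrix ℝ).rank_add_finrank_ker_mulVecLin
  rw [Fintype.card_fin] at h
  split_ifs with h4
  · rw [finrank_cycleGraph_ker_adjMatrix_mulVecLin m h4] at h
    omega
  · rw [cycleGraph_ker_adjMatrix_mulVecLin_eq_bot m h4, finrank_bot] at h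
    omega
end

section
/- A simple connected graph Γ has adjacency matrix rank 2 over ℝ if and only if Γ is obtained from K_2 by multiplication of vertices, i.e., Γ is a complete bipartite graph K_{a,b} with a, b ≥ 1. -/
/-!
If `u ~ v` is an edge, the rows `A u` and `A v` of the adjacency matrix are independent (look at
columns `u` and `v`), so rank 2 puts every row in their span, and comparing entries in columns `v`
and `u` gives `A x y = A x v * A u y + A x u * A v y`. On the diagonal this says that, as `2 ≠ 0`,
`u` and `v` have no common neighbour; at an edge `x ~ y` it says that `x` is adjacent to `u` or to
`v`. Without isolated vertices this leaves `x ~ y ↔ (u ~ x ↔ ¬ u ~ y)`: the graph is complete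
bipartite with parts `N(u)` and its complement. Conversely `K_{a,b}` has an edge and only two
distinct rows.
-/

open SimpleGraph Module Submodule

namespace Matrix

variable {m n K : Type*} [Field K] [Fintype n] {A : Matrix m n K} {i j : m}

theorem two_le_rank_of_linearIndependent_pair (h : LinearIndependent K ![A i, A j]) :
    2 ≤ A.rank := by
  have hsub : (A.submatrix ![i, j] id).rank = 2 := by
    rw [LinearIndependent.rank_matrix, Fintype.card_fin]
    convert h using 1
    ext k : 1
    fin_cases k <;> rfl
  exact hsub ▸ A.rank_submatrix_le _ _

variable [Fintype m]

theorem rank_le_two_of_forall_row_eq (h : ∀ k, A k = A i ∨ A k = A j) : A.rank ≤ 2 := by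
  rw [rank_eq_finrank_span_row]
  calc finrank K (span K (Set.range A.row))
      ≤ finrank K (span K (Set.range ![A i, A j])) := by
        refine finrank_mono (span_mono ?_)
        rintro _ ⟨k, rfl⟩
        rcases h k with hk | hk
        exacts [⟨0, hk.symm⟩, ⟨1, hk.symm⟩]
    _ ≤ 2 := (finrank_range_le_card _).trans_eq (Fintype.card_fin 2)

theorem row_mem_span_pair_of_rank_eq_two (hA : A.rank = 2)
    (h : LinearIndependent K ![A i, A j]) (k : m) : A k ∈ span K {A i, A j} := by
  have hle : span K {A i, A j} ≤ span K (Set.range A.row) :=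
    span_mono (Set.insert_subset ⟨i, rfl⟩ (Set.singleton_subset_iff.2 ⟨j, rfl⟩))
  have hpair : finrank K (span K {A i, A j}) = 2 := by
    rw [← range_cons_cons_empty, finrank_span_eq_card h, Fintype.card_fin]
  rw [eq_of_le_of_finrank_eq hle (by rw [hpair, ← rank_eq_finrank_span_row, hA])]
  exact subset_span ⟨k, rfl⟩

end Matrix

namespace SimpleGraph

variable {V : Type*} {G : SimpleGraph V}

def isoCompleteBipartiteGraphOfAdjIff (p : V → Prop) [DecidablePred p]
    (h : ∀ x y, G.Adj x y ↔ (p x ↔ ¬ p y)) :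
    G ≃g completeBipartiteGraph {x // p x} {x // ¬ p x} where
  toEquiv := (Equiv.sumCompl p).symm
  map_rel_iff' {x y} := by
    by_cases hx : p x <;> by_cases hy : p y <;>
      simp [Equiv.sumCompl_symm_apply_of_pos, Equiv.sumCompl_symm_apply_of_neg, h, hx, hy]

variable [DecidableRel G.Adj]

theorem Iso.rank_adjMatrix_eq {R W : Type*} [CommSemiring R] [Fintype V] [Fintype W]
    {H : SimpleGraph W} [DecidableRel H.Adj] (f : G ≃g H) :
    (G.adjMatrix R).rank = (H.adjMatrix R).rank := by
  rw [← f.reindex_adjMatrix R, Matrix.rank_reindex]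

theorem linearIndependent_adjMatrix_pair {R : Type*} [Ring R] [Nontrivial R] {u v : V}
    (huv : G.Adj u v) : LinearIndependent R ![G.adjMatrix R u, G.adjMatrix R v] := by
  refine LinearIndependent.pair_iff.2 fun s t hst => ⟨?_, ?_⟩
  · simpa [huv] using congrFun hst v
  · simpa [huv.symm] using congrFun hst u

variable {K : Type*} [Field K] {u v : V}

theorem rank_adjMatrix_completeBipartiteGraph {α β : Type*} [Fintype α] [Fintype β]
    [Nonempty α] [Nonempty β] [DecidableRel (completeBipartiteGraph α β).Adj] :
    ((completeBipartiteGraph α β).adjMatrix K).rank = 2 := by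
  obtain ⟨a⟩ := ‹Nonempty α›
  obtain ⟨b⟩ := ‹Nonempty β›
  have hab : (completeBipartiteGraph α β).Adj (.inl a) (.inr b) := by simp
  refine le_antisymm (Matrix.rank_le_two_of_forall_row_eq (i := .inl a) (j := .inr b) ?_)
    (Matrix.two_le_rank_of_linearIndependent_pair (linearIndependent_adjMatrix_pair hab))
  rintro (_ | _)
  · left; ext (_ | _) <;> simp [adjMatrix_apply]
  · right; ext (_ | _) <;> simp [adjMatrix_apply]

variable [Fintype V]

theorem adjMatrix_apply_eq_of_rank_eq_two (hrank : (G.adjMatrix K).rank = 2) (huv : G.Adj u v)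
    (x y : V) : G.adjMatrix K x y =
      G.adjMatrix K x v * G.adjMatrix K u y + G.adjMatrix K x u * G.adjMatrix K v y := by
  obtain ⟨s, t, hst⟩ := mem_span_pair.1 <| Matrix.row_mem_span_pair_of_rank_eq_two hrank
    (linearIndependent_adjMatrix_pair huv) x
  have hs : G.adjMatrix K x v = s := by simpa [huv] using (congrFun hst v).symm
  have ht : G.adjMatrix K x u = t := by simpa [huv.symm] using (congrFun hst u).symm
  rw [hs, ht, ← hst]
  rfl

variable [NeZero (2 : K)]

theorem not_adj_and_adj_of_rank_eq_two (hrank : (G.adjMatrix K).rank = 2) (huv : G.Adj u v)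
    (w : V) : ¬ (G.Adj u w ∧ G.Adj v w) := by
  rintro ⟨hu, hv⟩
  have := adjMatrix_apply_eq_of_rank_eq_two hrank huv w w
  simp only [adjMatrix_apply, G.irrefl, hu, hv, hu.symm, hv.symm, ↓reduceIte, mul_one] at this
  exact two_ne_zero (this.trans one_add_one_eq_two).symm

theorem adj_iff_of_rank_eq_two (hrank : (G.adjMatrix K).rank = 2) (huv : G.Adj u v) (x y : V) :
    G.Adj x y ↔ G.Adj x v ∧ G.Adj u y ∨ G.Adj x u ∧ G.Adj v y := by
  have hx := not_adj_and_adj_of_rank_eq_two hrank huv x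
  have := adjMatrix_apply_eq_of_rank_eq_two hrank huv x y
  simp only [adjMatrix_apply] at this
  split_ifs at this <;> simp_all [adj_comm]

theorem adj_iff_not_adj_of_rank_eq_two (hrank : (G.adjMatrix K).rank = 2) (huv : G.Adj u v)
    {w y : V} (hwy : G.Adj w y) : G.Adj u w ↔ ¬ G.Adj v w := by
  refine ⟨fun hu hv => not_adj_and_adj_of_rank_eq_two hrank huv w ⟨hu, hv⟩, fun hv => ?_⟩
  rcases (adj_iff_of_rank_eq_two hrank huv w y).1 hwy with ⟨hwv, -⟩ | ⟨hwu, -⟩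
  exacts [absurd hwv.symm hv, hwu.symm]

theorem adj_iff_of_rank_eq_two_of_forall_exists_adj (hrank : (G.adjMatrix K).rank = 2)
    (huv : G.Adj u v) (hdeg : ∀ w, ∃ y, G.Adj w y) (x y : V) :
    G.Adj x y ↔ (G.Adj u x ↔ ¬ G.Adj u y) := by
  have hv : ∀ z, G.Adj v z ↔ ¬ G.Adj u z := fun z => by
    obtain ⟨_, hz⟩ := hdeg z
    rw [adj_iff_not_adj_of_rank_eq_two hrank huv hz, not_not]
  rw [adj_iff_of_rank_eq_two hrank huv, G.adj_comm x v, G.adj_comm x u, hv x, hv y]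
  tauto

end SimpleGraph

theorem stmt_18_general {V : Type*} [Fintype V] (G : SimpleGraph V)
    [DecidableRel G.Adj] (hG : G.Connected) (hcard : 2 ≤ Fintype.card V) :
    (G.adjMatrix ℝ).rank = 2 ↔
      ∃ a b : ℕ, 0 < a ∧ 0 < b ∧
        Nonempty (G ≃g completeBipartiteGraph (Fin a) (Fin b)) := by
  have : Nontrivial V := Fintype.one_lt_card_iff_nontrivial.1 hcard
  have hdeg : ∀ w, ∃ y, G.Adj w y := hG.preconnected.exists_adj_of_nontrivial
  obtain ⟨u⟩ := hG.nonempty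
  obtain ⟨v, huv⟩ := hdeg u
  constructor
  · intro hrank
    let e := isoCompleteBipartiteGraphOfAdjIff (G.Adj u)
      (adj_iff_of_rank_eq_two_of_forall_exists_adj hrank huv hdeg)
    exact ⟨_, _, Fintype.card_pos_iff.2 ⟨⟨v, huv⟩⟩, Fintype.card_pos_iff.2 ⟨⟨u, G.irrefl⟩⟩,
      ⟨e.trans (completeBipartiteGraphCongr (Fintype.equivFin _) (Fintype.equivFin _))⟩⟩
  · rintro ⟨a, b, ha, hb, ⟨e⟩⟩
    have : Nonempty (Fin a) := ⟨⟨0, ha⟩⟩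
    have : Nonempty (Fin b) := ⟨⟨0, hb⟩⟩
    classical
    rw [e.rank_adjMatrix_eq, rank_adjMatrix_completeBipartiteGraph]

/-- A simple connected graph (with at least two vertices) has adjacency matrix rank 2 over
`ℝ` if and only if it is a complete bipartite graph `K_{a,b}` with `a, b ≥ 1` (equivalently,
it is obtained from `K_2` by multiplication of vertices). -/
theorem stmt_18 {V : Type*} [Fintype V] [DecidableEq V] (G : SimpleGraph V)
    [DecidableRel G.Adj] (hG : G.Connected) (hcard : 2 ≤ Fintype.card V) :
    (G.adjMatrix ℝ).rank = 2 ↔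
      ∃ a b : ℕ, 0 < a ∧ 0 < b ∧
        Nonempty (G ≃g completeBipartiteGraph (Fin a) (Fin b)) :=
  stmt_18_general G hG hcard
end
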